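/- arXiv:1806.02122 — 3 statements merged into one kernel-verified Lean document; each statement's English description precedes it below -/
import Mathlib

section
/- The number of spanning trees of the complete graph on n vertices is n^(n-2) for n ≥ 1. -/
open SimpleGraph

noncomputable def treeCount {V : Type*} (Γ : SimpleGraph V) : ℕ :=
  {H : Γ.Subgraph | H.IsSpanning ∧ H.coe.IsTree}.ncard

def powerGraph (G : Type*) [Group G] : SimpleGraph G where
  Adj x y := x ≠ y ∧ (x ∈ Subgroup.zpowers y ∨ y ∈ Subgroup.zpowers x)
  symm := ⟨by rintro a b ⟨h, h'⟩; exact ⟨h.symm, h'.symm⟩⟩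
  loopless := ⟨by intro a h; exact h.1 rfl⟩

def powerGraphOn (G : Type*) [Group G] (X : Set G) : SimpleGraph X where
  Adj x y := x ≠ y ∧ (Subgroup.zpowers (x : G) ≤ Subgroup.zpowers (y : G) ∨
      Subgroup.zpowers (y : G) ≤ Subgroup.zpowers (x : G))
  symm := ⟨by rintro a b ⟨h, h'⟩; exact ⟨h.symm, h'.symm⟩⟩
  loopless := ⟨by intro a h; exact h.1 rfl⟩

def joinGraph {α β : Type*} (G₁ : SimpleGraph α) (G₂ : SimpleGraph β) :
    SimpleGraph (α ⊕ β) where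
  Adj u v := match u, v with
    | .inl a, .inl b => G₁.Adj a b
    | .inr a, .inr b => G₂.Adj a b
    | _, _ => True
  symm := ⟨by rintro (a|a) (b|b) h <;> simp_all <;> exact h.symm⟩
  loopless := ⟨by rintro (a|a) h <;> exact h.ne rfl⟩

def disjUnionGraph {α β : Type*} (G₁ : SimpleGraph α) (G₂ : SimpleGraph β) :
    SimpleGraph (α ⊕ β) where
  Adj u v := match u, v with
    | .inl a, .inl b => G₁.Adj a b
    | .inr a, .inr b => G₂.Adj a b
    | _, _ => False
  symm := ⟨by rintro (a|a) (b|b) h <;> simp_all <;> exact h.symm⟩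
  loopless := ⟨by rintro (a|a) h <;> exact h.ne rfl⟩

def copiesK (c k : ℕ) : SimpleGraph (Fin c × Fin k) where
  Adj u v := u.1 = v.1 ∧ u ≠ v
  symm := ⟨by rintro a b ⟨h, h'⟩; exact ⟨h.symm, h'.symm⟩⟩
  loopless := ⟨by intro a h; exact h.2 rfl⟩


/-!
Rooting a tree at a vertex `r` turns it into its parent function: a self-map fixing `r` along
whose iterates every vertex reaches `r`, from which the tree is recovered as the graph of edges
`{v, f v}`. Parent functions on a finite set `s` are counted by their Prüfer codes: prune the
smallest leaf, record its parent, and repeat until two vertices remain. This gives a word of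
length `#s - 2` over `s`, and since a vertex other than `r` is a leaf exactly when it does not
occur in the code, the code can be inverted one pruning step at a time.
-/

open Finset Function

variable {α : Type*}

-- `f` sends each vertex of `s` to its parent in a tree on `s` rooted at `r`; it is the identity
-- off `s`, so that it is determined by the tree.
structure IsParentFun (s : Finset α) (r : α) (f : α → α) : Prop where
  apply_of_notMem : ∀ v ∉ s, f v = v
  apply_mem : ∀ v ∈ s, f v ∈ s
  apply_root : f r = r
  exists_iterate_eq_root : ∀ v ∈ s, ∃ k, f^[k] v = r

noncomputable def depth (f : α → α) (r v : α) : ℕ := sInf {k | f^[k] v = r}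

lemma iterate_update_of_forall_ne [DecidableEq α] {f : α → α} {a c v : α}
    (h : ∀ k, f^[k] v ≠ a) (k : ℕ) : (update f a c)^[k] v = f^[k] v := by
  induction k with
  | zero => rfl
  | succ k ih => rw [iterate_succ_apply', iterate_succ_apply', ih, update_of_ne (h k)]

def words (s : Finset α) (m : ℕ) : Set (List α) := {l | l.length = m ∧ ∀ x ∈ l, x ∈ s}

lemma ncard_words (s : Finset α) (m : ℕ) : (words s m).ncard = #s ^ m := by
  induction m with
  | zero =>
    have : words s 0 = {[]} := by
      ext l
      simp +contextual [words, List.length_eq_zero_iff]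
    rw [this, Set.ncard_singleton, pow_zero]
  | succ m ih =>
    have : words s (m + 1) = (fun p : α × List α => p.1 :: p.2) '' (↑s ×ˢ words s m) := by
      ext (_ | ⟨a, t⟩) <;> simp [words, and_assoc, and_left_comm]
    rw [this, Set.InjOn.ncard_image fun p _ q _ h => Prod.ext (List.cons.inj h).1 (List.cons.inj h).2,
      Set.ncard_prod, ih, Set.ncard_coe_finset, pow_succ, mul_comm]

namespace IsParentFun

variable {s : Finset α} {r v : α} {f : α → α}

lemma root_mem (hf : IsParentFun s r f) (hv : v ∈ s) : r ∈ s := by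
  obtain ⟨k, hk⟩ := hf.exists_iterate_eq_root v hv
  induction k generalizing v with
  | zero => exact hk ▸ hv
  | succ k ih => exact ih (hf.apply_mem v hv) hk

lemma iterate_mem (hf : IsParentFun s r f) (hv : v ∈ s) (k : ℕ) : f^[k] v ∈ s := by
  induction k with
  | zero => exact hv
  | succ k ih => rw [iterate_succ_apply']; exact hf.apply_mem _ ih

lemma apply_ne_self (hf : IsParentFun s r f) (hv : v ∈ s) (hvr : v ≠ r) : f v ≠ v := by
  intro h
  obtain ⟨k, hk⟩ := hf.exists_iterate_eq_root v hv
  exact hvr (by rwa [iterate_fixed h] at hk)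

lemma eq_root_of_apply_apply_eq (hf : IsParentFun s r f) (hv : v ∈ s) (h : f (f v) = v) :
    v = r := by
  obtain ⟨k, hk⟩ := hf.exists_iterate_eq_root v hv
  have h2 : ∀ k, f^[k] v = v ∨ f^[k] v = f v := by
    intro k
    induction k with
    | zero => exact Or.inl rfl
    | succ k ih =>
      rw [iterate_succ_apply']
      rcases ih with h' | h' <;> rw [h']
      exacts [Or.inr rfl, Or.inl h]
  rcases h2 k with h' | h'
  · exact h'.symm.trans hk
  · rw [← h, ← h', hk, hf.apply_root]

lemma apply_eq_root_of_card_le_two (hf : IsParentFun s r f) (hs : #s ≤ 2) (hv : v ∈ s) :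
    f v = r := by
  by_contra hfv
  have hvr : v ≠ r := fun h => hfv (h ▸ hf.apply_root)
  exact hs.not_gt <| two_lt_card.2 ⟨f v, hf.apply_mem v hv, v, hv, r, hf.root_mem hv,
    hf.apply_ne_self hv hvr, hfv, hvr⟩

lemma depth_apply_lt (hf : IsParentFun s r f) (hv : v ∈ s) (hvr : v ≠ r) :
    depth f r (f v) < depth f r v := by
  have hd : f^[depth f r v] v = r := Nat.sInf_mem (hf.exists_iterate_eq_root v hv)
  have hd0 : depth f r v ≠ 0 := fun h0 => hvr (by rwa [h0] at hd)
  have : f^[depth f r v - 1] (f v) = r := by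
    rwa [← iterate_succ_apply, Nat.succ_eq_add_one, Nat.sub_add_cancel (by omega)]
  have : depth f r (f v) ≤ depth f r v - 1 := Nat.sInf_le this
  omega

end IsParentFun

section Prufer

variable [LinearOrder α] {s : Finset α} {r v ℓ a : α} {f g : α → α} {c : List α}

def leaves (s : Finset α) (r : α) (f : α → α) : Finset α :=
  (s.erase r).filter fun v => ∀ u ∈ s, f u = v → u = v

lemma mem_leaves : v ∈ leaves s r f ↔ v ≠ r ∧ v ∈ s ∧ ∀ u ∈ s, f u = v → u = v := by
  simp [leaves, and_assoc]

lemma mem_leaves_update (hℓ : ℓ ∈ s) (hv : v ≠ ℓ) :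
    v ∈ leaves s r (update f ℓ a) ↔ v ∈ leaves (s.erase ℓ) r f ∧ a ≠ v := by
  simp only [mem_leaves, mem_erase]
  constructor
  · rintro ⟨hvr, hvs, hleaf⟩
    refine ⟨⟨hvr, ⟨hv, hvs⟩, fun u hu hfu => hleaf u hu.2 ?_⟩, fun ha => hv (hleaf ℓ hℓ ?_).symm⟩
    · rwa [update_of_ne hu.1]
    · rwa [update_self]
  · rintro ⟨⟨hvr, ⟨-, hvs⟩, hleaf⟩, ha⟩
    refine ⟨hvr, hvs, fun u hu hfu => ?_⟩
    rcases eq_or_ne u ℓ with rfl | huℓ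
    · exact absurd (by rwa [update_self] at hfu) ha
    · exact hleaf u ⟨huℓ, hu⟩ (by rwa [update_of_ne huℓ] at hfu)

def pruferCode (s : Finset α) (r : α) (f : α → α) : List α :=
  if h : 2 < #s ∧ (leaves s r f).Nonempty then
    let ℓ := (leaves s r f).min' h.2
    f ℓ :: pruferCode (s.erase ℓ) r (update f ℓ ℓ)
  else []
termination_by #s
decreasing_by exact card_erase_lt_of_mem (mem_leaves.1 ((leaves s r f).min'_mem h.2)).2.1

lemma pruferCode_of_card_le_two (hs : #s ≤ 2) : pruferCode s r f = [] := by
  rw [pruferCode, dif_neg (by omega)]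

lemma pruferCode_of_isLeast (hs : 2 < #s) (hℓ : IsLeast (leaves s r f : Set α) ℓ) :
    pruferCode s r f = f ℓ :: pruferCode (s.erase ℓ) r (update f ℓ ℓ) := by
  have hL : (leaves s r f).Nonempty := ⟨ℓ, hℓ.1⟩
  rw [pruferCode, dif_pos ⟨hs, hL⟩, hℓ.unique ((leaves s r f).isLeast_min' hL)]

lemma isParentFun_const (hr : r ∈ s) : IsParentFun s r fun v => if v ∈ s then r else v :=
  ⟨fun v hv => if_neg hv, fun v hv => by rwa [if_pos hv], if_pos hr,
    fun v hv => ⟨1, by simp [hv]⟩⟩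

namespace IsParentFun

lemma leaves_nonempty (hf : IsParentFun s r f) (hs : 2 ≤ #s) : (leaves s r f).Nonempty := by
  obtain ⟨w, hw⟩ := card_pos.1 (by omega : 0 < #s)
  have hr := hf.root_mem hw
  have hne : (s.erase r).Nonempty := by
    rw [← card_pos, card_erase_of_mem hr]
    omega
  obtain ⟨v, hv, hmax⟩ := exists_max_image (s.erase r) (depth f r) hne
  refine ⟨v, mem_leaves.2 ⟨ne_of_mem_erase hv, mem_of_mem_erase hv, fun u hu hfu => ?_⟩⟩
  by_contra huv
  have hur : u ≠ r := fun h => ne_of_mem_erase hv (by rw [← hfu, h, hf.apply_root])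
  have := hf.depth_apply_lt hu hur
  rw [hfu] at this
  exact (hmax u (mem_erase.2 ⟨hur, hu⟩)).not_gt this

lemma iterate_ne_of_mem_leaves (hf : IsParentFun s r f) (hℓ : ℓ ∈ leaves s r f) (hv : v ∈ s)
    (hvℓ : v ≠ ℓ) (k : ℕ) : f^[k] v ≠ ℓ := by
  induction k with
  | zero => exact hvℓ
  | succ k ih =>
    rw [iterate_succ_apply']
    exact fun h => ih ((mem_leaves.1 hℓ).2.2 _ (hf.iterate_mem hv k) h)

lemma update_of_mem_leaves (hf : IsParentFun s r f) (hℓ : ℓ ∈ leaves s r f) :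
    IsParentFun (s.erase ℓ) r (update f ℓ ℓ) := by
  obtain ⟨hℓr, hℓs, hleaf⟩ := mem_leaves.1 hℓ
  refine ⟨fun v hv => ?_, fun v hv => ?_, ?_, fun v hv => ?_⟩
  · rcases eq_or_ne v ℓ with rfl | hvℓ
    · exact update_self ..
    · rw [update_of_ne hvℓ]
      exact hf.apply_of_notMem v fun hvs => hv (mem_erase.2 ⟨hvℓ, hvs⟩)
  · obtain ⟨hvℓ, hvs⟩ := mem_erase.1 hv
    rw [update_of_ne hvℓ]
    exact mem_erase.2 ⟨fun h => hvℓ (hleaf v hvs h), hf.apply_mem v hvs⟩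
  · rw [update_of_ne hℓr.symm, hf.apply_root]
  · obtain ⟨hvℓ, hvs⟩ := mem_erase.1 hv
    obtain ⟨k, hk⟩ := hf.exists_iterate_eq_root v hvs
    exact ⟨k, by rwa [iterate_update_of_forall_ne (hf.iterate_ne_of_mem_leaves hℓ hvs hvℓ)]⟩

lemma update_of_erase (hg : IsParentFun (s.erase ℓ) r g) (hℓ : ℓ ∈ s) (ha : a ∈ s.erase ℓ) :
    IsParentFun s r (update g ℓ a) := by
  have hr := hg.root_mem ha
  have hreach : ∀ v ∈ s.erase ℓ, ∃ k, (update g ℓ a)^[k] v = r := fun v hv => by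
    obtain ⟨k, hk⟩ := hg.exists_iterate_eq_root v hv
    refine ⟨k, ?_⟩
    rwa [iterate_update_of_forall_ne fun j h => (mem_erase.1 (h ▸ hg.iterate_mem hv j)).1 rfl]
  refine ⟨fun v hv => ?_, fun v hv => ?_, ?_, fun v hv => ?_⟩
  · rw [update_of_ne (ne_of_mem_of_not_mem hℓ hv).symm]
    exact hg.apply_of_notMem v fun h => hv (mem_of_mem_erase h)
  · rcases eq_or_ne v ℓ with rfl | hvℓ
    · rw [update_self]
      exact mem_of_mem_erase ha
    · rw [update_of_ne hvℓ]
      exact mem_of_mem_erase (hg.apply_mem v (mem_erase.2 ⟨hvℓ, hv⟩))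
  · rw [update_of_ne (ne_of_mem_erase hr), hg.apply_root]
  · rcases eq_or_ne v ℓ with rfl | hvℓ
    · obtain ⟨k, hk⟩ := hreach a ha
      exact ⟨k + 1, by rwa [iterate_succ_apply, update_self]⟩
    · exact hreach v (mem_erase.2 ⟨hvℓ, hv⟩)

lemma mem_leaves_update_self (hg : IsParentFun (s.erase ℓ) r g) (hℓ : ℓ ∈ s) (hℓr : ℓ ≠ r) :
    ℓ ∈ leaves s r (update g ℓ a) := by
  refine mem_leaves.2 ⟨hℓr, hℓ, fun u hu h => ?_⟩
  by_contra huℓ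
  rw [update_of_ne huℓ] at h
  exact (mem_erase.1 (h ▸ hg.apply_mem u (mem_erase.2 ⟨huℓ, hu⟩))).1 rfl

lemma pruferCode_mem_words (hf : IsParentFun s r f) : pruferCode s r f ∈ words s (#s - 2) := by
  induction s using Finset.strongInduction generalizing f with
  | H s ih =>
  by_cases hs : #s ≤ 2
  · rw [pruferCode_of_card_le_two hs]
    exact ⟨by simp; omega, by simp⟩
  have hL := hf.leaves_nonempty (by omega)
  have hℓ := (leaves s r f).isLeast_min' hL
  set ℓ := (leaves s r f).min' hL
  have hℓs := (mem_leaves.1 hℓ.1).2.1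
  obtain ⟨hlen, hmem⟩ := ih _ (erase_ssubset hℓs) (hf.update_of_mem_leaves hℓ.1)
  rw [pruferCode_of_isLeast (by omega) hℓ]
  refine ⟨by rw [List.length_cons, hlen, card_erase_of_mem hℓs]; omega, ?_⟩
  rintro x (_ | ⟨_, hx⟩)
  · exact hf.apply_mem ℓ hℓs
  · exact mem_of_mem_erase (hmem x hx)

lemma leaves_eq (hf : IsParentFun s r f) :
    leaves s r f = (s.erase r).filter (· ∉ pruferCode s r f) := by
  induction s using Finset.strongInduction generalizing f with
  | H s ih =>
  ext v
  by_cases hs : #s ≤ 2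
  · simp only [pruferCode_of_card_le_two hs, mem_leaves, mem_filter, mem_erase,
      List.not_mem_nil, not_false_eq_true, and_true]
    refine ⟨fun h => ⟨h.1, h.2.1⟩, fun ⟨hvr, hv⟩ => ⟨hvr, hv, ?_⟩⟩
    rintro u hu rfl
    exact absurd (hf.apply_eq_root_of_card_le_two hs hu) hvr
  have hL := hf.leaves_nonempty (by omega)
  have hℓ := (leaves s r f).isLeast_min' hL
  set ℓ := (leaves s r f).min' hL
  obtain ⟨hℓr, hℓs, -⟩ := mem_leaves.1 hℓ.1
  have hf' := hf.update_of_mem_leaves hℓ.1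
  rw [pruferCode_of_isLeast (by omega) hℓ, mem_filter, List.mem_cons, not_or]
  rcases eq_or_ne v ℓ with rfl | hvℓ
  · refine iff_of_true hℓ.1 ⟨mem_erase.2 ⟨hℓr, hℓs⟩, (hf.apply_ne_self hℓs hℓr).symm, ?_⟩
    exact fun h => (mem_erase.1 (hf'.pruferCode_mem_words.2 ℓ h)).1 rfl
  · conv_lhs => rw [← update_eq_self ℓ f, ← update_idem ℓ (f ℓ) f]
    rw [mem_leaves_update hℓs hvℓ, ih _ (erase_ssubset hℓs) hf', mem_filter, mem_erase,
      mem_erase, mem_erase]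
    tauto

lemma eq_of_pruferCode_eq (hf : IsParentFun s r f) (hg : IsParentFun s r g)
    (h : pruferCode s r f = pruferCode s r g) : f = g := by
  induction s using Finset.strongInduction generalizing f g with
  | H s ih =>
  by_cases hs : #s ≤ 2
  · funext v
    by_cases hv : v ∈ s
    · rw [hf.apply_eq_root_of_card_le_two hs hv, hg.apply_eq_root_of_card_le_two hs hv]
    · rw [hf.apply_of_notMem v hv, hg.apply_of_notMem v hv]
  have hL := hf.leaves_nonempty (by omega)
  have hℓf := (leaves s r f).isLeast_min' hL
  set ℓ := (leaves s r f).min' hL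
  have hℓg : IsLeast (leaves s r g : Set α) ℓ := by rwa [hg.leaves_eq, ← h, ← hf.leaves_eq]
  have hℓs := (mem_leaves.1 hℓf.1).2.1
  rw [pruferCode_of_isLeast (by omega) hℓf, pruferCode_of_isLeast (by omega) hℓg] at h
  obtain ⟨hfℓ, htail⟩ := List.cons.inj h
  have hupd := ih _ (erase_ssubset hℓs) (hf.update_of_mem_leaves hℓf.1)
    (hg.update_of_mem_leaves hℓg.1) htail
  calc f = update (update f ℓ ℓ) ℓ (f ℓ) := by simp
    _ = update (update g ℓ ℓ) ℓ (g ℓ) := by rw [hupd, hfℓ]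
    _ = g := by simp

end IsParentFun

lemma exists_isParentFun_pruferCode_eq (hr : r ∈ s) (hc : c ∈ words s (#s - 2)) :
    ∃ f, IsParentFun s r f ∧ pruferCode s r f = c := by
  induction s using Finset.strongInduction generalizing c with
  | H s ih =>
  obtain ⟨hlen, hmem⟩ := hc
  by_cases hs : #s ≤ 2
  · exact ⟨_, isParentFun_const hr, by
      rw [pruferCode_of_card_le_two hs, eq_comm, ← List.length_eq_zero_iff]; omega⟩
  obtain ⟨a, t, rfl⟩ := List.exists_cons_of_length_pos (by omega : 0 < c.length)
  set L := (s.erase r).filter (· ∉ a :: t)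
  obtain ⟨x, hx, hxc⟩ := exists_mem_notMem_of_card_lt_card (s := (a :: t).toFinset)
    (t := s.erase r) (by have := (a :: t).toFinset_card_le; rw [card_erase_of_mem hr]; omega)
  have hL : L.Nonempty := ⟨x, mem_filter.2 ⟨hx, by simpa using hxc⟩⟩
  have hℓmin := L.isLeast_min' hL
  set ℓ := L.min' hL
  obtain ⟨hℓ, hℓc⟩ := mem_filter.1 hℓmin.1
  obtain ⟨hℓr, hℓs⟩ := mem_erase.1 hℓ
  have hne : ∀ y ∈ a :: t, y ≠ ℓ := fun y hy h => hℓc (h ▸ hy)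
  obtain ⟨g, hg, hgt⟩ := ih _ (erase_ssubset hℓs) (c := t) (mem_erase.2 ⟨hℓr.symm, hr⟩)
    ⟨by simp at hlen; rw [card_erase_of_mem hℓs]; omega,
      fun y hy => mem_erase.2 ⟨hne y (.tail a hy), hmem y (.tail a hy)⟩⟩
  have ha : a ∈ s.erase ℓ := mem_erase.2 ⟨hne a (.head t), hmem a (.head t)⟩
  have hleaves : leaves s r (update g ℓ a) = L := by
    ext v
    rcases eq_or_ne v ℓ with rfl | hvℓ
    · exact iff_of_true (hg.mem_leaves_update_self hℓs hℓr) hℓmin.1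
    · rw [mem_leaves_update hℓs hvℓ, hg.leaves_eq, hgt]
      simp only [L, mem_filter, mem_erase, List.mem_cons, not_or]
      tauto
  refine ⟨_, hg.update_of_erase hℓs ha, ?_⟩
  rw [pruferCode_of_isLeast (by omega) (by rwa [hleaves]), update_self, update_idem,
    update_eq_self_iff.2 (hg.apply_of_notMem ℓ (by simp)).symm, hgt]

lemma bijOn_pruferCode (hr : r ∈ s) :
    Set.BijOn (pruferCode s r) {f | IsParentFun s r f} (words s (#s - 2)) :=
  ⟨fun _ hf => IsParentFun.pruferCode_mem_words hf,
    fun _ hf _ hg h => IsParentFun.eq_of_pruferCode_eq hf hg h,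
    fun _ hc => exists_isParentFun_pruferCode_eq hr hc⟩

end Prufer

lemma ncard_setOf_isParentFun {s : Finset α} {r : α} (hr : r ∈ s) :
    {f : α → α | IsParentFun s r f}.ncard = #s ^ (#s - 2) := by
  -- `pruferCode` needs a linear order to choose the leaf it prunes; any one will do
  let := IsWellOrder.linearOrder (WellOrderingRel (α := α))
  rw [(bijOn_pruferCode hr).ncard_eq, ncard_words]

namespace SimpleGraph

variable {V : Type*} {G T : SimpleGraph V} {f g : V → V} {r : V}

def parentGraph (f : V → V) : SimpleGraph V := fromRel fun u v => f u = v

lemma reachable_parentGraph_iterate (f : V → V) (v : V) (k : ℕ) :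
    (parentGraph f).Reachable v (f^[k] v) := by
  induction k generalizing v with
  | zero => rfl
  | succ k ih =>
    refine .trans ?_ (ih (f v))
    by_cases hv : v = f v
    · rw [← hv]
    · exact Adj.reachable ((fromRel_adj ..).2 ⟨hv, .inl rfl⟩)

lemma Connected.exists_adj_dist_lt (hG : G.Connected) {v : V} (hvr : v ≠ r) :
    ∃ w, G.Adj v w ∧ G.dist w r < G.dist v r := by
  obtain ⟨p, hp⟩ := hG.exists_walk_length_eq_dist v r
  cases p with
  | nil => exact absurd rfl hvr
  | cons h q => exact ⟨_, h, by have := dist_le q; rw [Walk.length_cons] at hp; omega⟩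

variable [Fintype V]

lemma _root_.IsParentFun.connected_parentGraph (hf : IsParentFun univ r f) :
    (parentGraph f).Connected := by
  have hr (v : V) : (parentGraph f).Reachable v r := by
    obtain ⟨k, hk⟩ := hf.exists_iterate_eq_root v (mem_univ v)
    exact hk ▸ reachable_parentGraph_iterate f v k
  have : Nonempty V := ⟨r⟩
  exact ⟨fun u v => (hr u).trans (hr v).symm⟩

lemma _root_.IsParentFun.edgeSet_parentGraph (hf : IsParentFun univ r f) :
    (parentGraph f).edgeSet = (fun v => s(v, f v)) '' {r}ᶜ := by
  ext e
  induction e using Sym2.ind with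
  | _ u v =>
  simp only [mem_edgeSet, parentGraph, fromRel_adj, Set.mem_image, Set.mem_compl_singleton_iff]
  constructor
  · rintro ⟨huv, rfl | rfl⟩
    · exact ⟨u, fun hu => huv (by rw [hu, hf.apply_root]), rfl⟩
    · exact ⟨v, fun hv => huv (by rw [hv, hf.apply_root]), Sym2.eq_swap⟩
  · rintro ⟨w, hwr, hw⟩
    have hfw := hf.apply_ne_self (mem_univ w) hwr
    rcases Sym2.eq_iff.1 hw with ⟨rfl, rfl⟩ | ⟨rfl, rfl⟩
    exacts [⟨hfw.symm, .inl rfl⟩, ⟨hfw, .inr rfl⟩]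

lemma _root_.IsParentFun.isTree_parentGraph (hf : IsParentFun univ r f) :
    (parentGraph f).IsTree := by
  refine isTree_iff_connected_and_card.2 ⟨hf.connected_parentGraph, ?_⟩
  have hinj : Set.InjOn (fun v => s(v, f v)) {r}ᶜ := fun v hv w hw h => by
    rcases Sym2.eq_iff.1 h with ⟨h, -⟩ | ⟨rfl, h⟩
    · exact h
    · exact absurd (hf.eq_root_of_apply_apply_eq (mem_univ w) h) hw
  rw [Nat.card_coe_set_eq, hf.edgeSet_parentGraph, hinj.ncard_image, Set.compl_eq_univ_sdiff,
    Set.ncard_sdiff_singleton_add_one (Set.mem_univ r), Set.ncard_univ]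

lemma _root_.IsParentFun.eq_of_parentGraph_eq (hf : IsParentFun univ r f)
    (hg : IsParentFun univ r g) (h : parentGraph f = parentGraph g) : f = g := by
  funext v
  induction hd : depth f r v using Nat.strong_induction_on generalizing v with
  | _ d ih =>
  rcases eq_or_ne v r with rfl | hvr
  · rw [hf.apply_root, hg.apply_root]
  have hffv : f (f v) = g (f v) := ih _ (hd ▸ hf.depth_apply_lt (mem_univ v) hvr) (f v) rfl
  have hadj : (parentGraph g).Adj v (f v) :=
    h ▸ (fromRel_adj ..).2 ⟨(hf.apply_ne_self (mem_univ v) hvr).symm, .inl rfl⟩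
  rcases ((fromRel_adj ..).1 hadj).2 with h' | h'
  · exact h'.symm
  · exact absurd (hf.eq_root_of_apply_apply_eq (mem_univ v) (hffv.trans h')) hvr

lemma Connected.exists_isParentFun_parentGraph_le (hG : G.Connected) (r : V) :
    ∃ f, IsParentFun univ r f ∧ parentGraph f ≤ G := by
  classical
  choose p hp using fun v : {v // v ≠ r} => hG.exists_adj_dist_lt v.2
  let f v := if h : v = r then r else p ⟨v, h⟩
  have hreach (d : ℕ) : ∀ v, G.dist v r = d → ∃ k, f^[k] v = r := by
    induction d using Nat.strong_induction_on with
    | _ d ih =>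
    intro v hd
    by_cases hvr : v = r
    · exact ⟨0, hvr⟩
    obtain ⟨k, hk⟩ := ih _ (hd ▸ (hp ⟨v, hvr⟩).2) _ rfl
    exact ⟨k + 1, by rwa [iterate_succ_apply, show f v = p ⟨v, hvr⟩ from dif_neg hvr]⟩
  have hadj {v : V} (hvr : v ≠ r) : G.Adj v (f v) := by
    simpa only [f, dif_neg hvr] using (hp ⟨v, hvr⟩).1
  refine ⟨f, ⟨fun v hv => absurd (mem_univ v) hv, fun v _ => mem_univ _, dif_pos rfl,
    fun v _ => hreach _ v rfl⟩, fun u v huv => ?_⟩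
  obtain ⟨hne, rfl | rfl⟩ := (fromRel_adj ..).1 huv
  · exact hadj fun hu => hne (by simp [f, hu])
  · exact (hadj fun hv => hne (by simp [f, hv])).symm

lemma IsTree.exists_isParentFun_parentGraph_eq (hT : T.IsTree) (r : V) :
    ∃ f, IsParentFun univ r f ∧ parentGraph f = T := by
  obtain ⟨f, hf, hle⟩ := hT.connected.exists_isParentFun_parentGraph_le r
  exact ⟨f, hf, (isTree_iff_minimal_connected.1 hT).eq_of_le hf.connected_parentGraph hle⟩

lemma ncard_setOf_isTree [Nonempty V] :
    {T : SimpleGraph V | T.IsTree}.ncard = Fintype.card V ^ (Fintype.card V - 2) := by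
  obtain ⟨r⟩ := ‹Nonempty V›
  have : Set.BijOn parentGraph {f | IsParentFun univ r f} {T | T.IsTree} :=
    ⟨fun _ hf => IsParentFun.isTree_parentGraph hf,
      fun _ hf _ hg h => IsParentFun.eq_of_parentGraph_eq hf hg h,
      fun _ hT => IsTree.exists_isParentFun_parentGraph_eq hT r⟩
  rw [← this.ncard_eq, ncard_setOf_isParentFun (mem_univ r), card_univ]

end SimpleGraph

lemma treeCount_eq_ncard {V : Type*} (Γ : SimpleGraph V) :
    treeCount Γ = {T : SimpleGraph V | T ≤ Γ ∧ T.IsTree}.ncard := by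
  refine Set.BijOn.ncard_eq ⟨fun H ⟨hs, hH⟩ => ⟨H.spanningCoe_le, ?_⟩,
    fun H₁ h₁ H₂ h₂ h => ?_, fun T ⟨hle, hT⟩ => ⟨toSubgraph T hle, ⟨?_, ?_⟩, rfl⟩⟩
  · exact (H.spanningCoeEquivCoeOfSpanning hs).isTree_iff.2 hH
  · exact Subgraph.ext (h₁.1.verts_eq_univ.trans h₂.1.verts_eq_univ.symm)
      (Subgraph.spanningCoe_inj.1 h)
  · exact toSubgraph.isSpanning T hle
  · exact ((toSubgraph T hle).spanningCoeEquivCoeOfSpanning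
      (toSubgraph.isSpanning T hle)).isTree_iff.1 hT

theorem cayley_formula (n : ℕ) (hn : 1 ≤ n) :
    treeCount (completeGraph (Fin n)) = n ^ (n - 2) := by
  have : Nonempty (Fin n) := ⟨⟨0, hn⟩⟩
  simp only [treeCount_eq_ncard, completeGraph, le_top, true_and]
  rw [ncard_setOf_isTree, Fintype.card_fin]
end

section
/- A finite group G has a complete power graph if and only if G is a cyclic group of prime power order. -/
/-!
The power graph is complete exactly when the cyclic subgroups of `G` form a chain. Then an
element of maximal order generates `G`, and two distinct primes dividing `|G|` would give, by
Cauchy's theorem, elements of distinct prime orders neither of which is a power of the other.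
Conversely, in a finite cyclic group `x ∈ ⟨y⟩` iff `orderOf x ∣ orderOf y`, and the divisors of
`p ^ k` form a chain.
-/

open SimpleGraph

open Subgroup

theorem powerGraph_eq_top_iff {G : Type*} [Group G] :
    powerGraph G = ⊤ ↔ ∀ x y : G, x ∈ zpowers y ∨ y ∈ zpowers x := by
  refine ⟨fun h x y => ?_, fun h => ?_⟩
  · by_cases hxy : x = y
    · exact .inl (hxy ▸ mem_zpowers x)
    · have hadj : (powerGraph G).Adj x y := h ▸ hxy
      exact hadj.2
  · ext x y
    exact ⟨fun hadj => hadj.1, fun hxy => ⟨hxy, h x y⟩⟩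

open Finset in
theorem IsCyclic.mem_zpowers_iff_orderOf_dvd {G : Type*} [Group G] [Finite G] [IsCyclic G]
    {x y : G} : x ∈ zpowers y ↔ orderOf x ∣ orderOf y := by
  classical
  refine ⟨orderOf_dvd_of_mem_zpowers, fun h => ?_⟩
  have := Fintype.ofFinite G
  -- The `orderOf y` elements of `zpowers y` are all killed by `orderOf y`, and a cyclic group
  -- has no more than `orderOf y` such elements.
  set S : Finset G := {a | a ^ orderOf y = 1}
  have hsub : (zpowers y : Set G).toFinset ⊆ S := fun a ha => by
    simpa [S] using
      orderOf_dvd_iff_pow_eq_one.mp (orderOf_dvd_of_mem_zpowers (Set.mem_toFinset.mp ha))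
  have hcard : #S ≤ #(zpowers y : Set G).toFinset := by
    rw [Set.toFinset_card, Fintype.card_eq_nat_card, SetLike.coe_sort_coe, Nat.card_zpowers]
    exact IsCyclic.card_pow_eq_one_le (orderOf_pos y)
  have hx : x ∈ S := by simpa [S] using orderOf_dvd_iff_pow_eq_one.mp h
  rw [← Finset.eq_of_subset_of_card_le hsub hcard] at hx
  simpa using hx

theorem isCyclic_of_forall_mem_zpowers_or {G : Type*} [Group G] [Finite G]
    (h : ∀ x y : G, x ∈ zpowers y ∨ y ∈ zpowers x) : IsCyclic G := by
  obtain ⟨g, hg⟩ := Finite.exists_max (orderOf : G → ℕ)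
  refine ⟨g, fun x => show x ∈ zpowers g from ?_⟩
  rcases h x g with hx | hg_mem
  · exact hx
  · have hord : orderOf x = orderOf g :=
      (hg x).antisymm (Nat.le_of_dvd (orderOf_pos x) (orderOf_dvd_of_mem_zpowers hg_mem))
    have heq : zpowers g = zpowers x :=
      eq_of_le_of_card_ge (zpowers_le.mpr hg_mem) (by rw [Nat.card_zpowers, Nat.card_zpowers, hord])
    exact heq ▸ mem_zpowers x

theorem eq_of_prime_dvd_natCard_of_forall_mem_zpowers_or {G : Type*} [Group G] [Finite G]
    (h : ∀ x y : G, x ∈ zpowers y ∨ y ∈ zpowers x) {p q : ℕ} (hp : p.Prime) (hq : q.Prime)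
    (hpG : p ∣ Nat.card G) (hqG : q ∣ Nat.card G) : p = q := by
  have := Fact.mk hp
  have := Fact.mk hq
  obtain ⟨x, rfl⟩ := exists_prime_orderOf_dvd_card' p hpG
  obtain ⟨y, rfl⟩ := exists_prime_orderOf_dvd_card' q hqG
  rcases h x y with hxy | hyx
  · exact (Nat.prime_dvd_prime_iff_eq hp hq).mp (orderOf_dvd_of_mem_zpowers hxy)
  · exact ((Nat.prime_dvd_prime_iff_eq hq hp).mp (orderOf_dvd_of_mem_zpowers hyx)).symm

theorem Nat.exists_prime_pow_eq_of_forall_prime_dvd_eq {n : ℕ} (hn : n ≠ 0)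
    (h : ∀ p q : ℕ, p.Prime → q.Prime → p ∣ n → q ∣ n → p = q) :
    ∃ p k : ℕ, p.Prime ∧ n = p ^ k := by
  rcases eq_or_ne n 1 with rfl | hn1
  · exact ⟨2, 0, Nat.prime_two, rfl⟩
  have hmin := Nat.minFac_prime hn1
  exact ⟨n.minFac, _, hmin, Nat.eq_prime_pow_of_unique_prime_dvd hn
    fun hd hdn => h _ _ hd hmin hdn (Nat.minFac_dvd n)⟩

theorem IsCyclic.mem_zpowers_or_of_natCard_eq_prime_pow {G : Type*} [Group G] [Finite G]
    [IsCyclic G] {p k : ℕ} (hp : p.Prime) (hG : Nat.card G = p ^ k) (x y : G) :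
    x ∈ zpowers y ∨ y ∈ zpowers x := by
  obtain ⟨i, -, hi⟩ := (Nat.dvd_prime_pow hp).mp (hG ▸ orderOf_dvd_natCard x)
  obtain ⟨j, -, hj⟩ := (Nat.dvd_prime_pow hp).mp (hG ▸ orderOf_dvd_natCard y)
  simp only [IsCyclic.mem_zpowers_iff_orderOf_dvd, hi, hj]
  exact (le_total i j).imp (pow_dvd_pow p) (pow_dvd_pow p)

/-- A finite group has a complete power graph iff it is cyclic of prime power order. -/
theorem powerGraph_complete_iff (G : Type*) [Group G] [Finite G] :
    powerGraph G = ⊤ ↔ (IsCyclic G ∧ ∃ p k : ℕ, p.Prime ∧ Nat.card G = p ^ k) := by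
  rw [powerGraph_eq_top_iff]
  refine ⟨fun h => ⟨isCyclic_of_forall_mem_zpowers_or h, ?_⟩, fun ⟨_, p, k, hp, hG⟩ =>
    IsCyclic.mem_zpowers_or_of_natCard_eq_prime_pow hp hG⟩
  exact Nat.exists_prime_pow_eq_of_forall_prime_dvd_eq Nat.card_pos.ne'
    fun p q hp hq => eq_of_prime_dvd_natCard_of_forall_mem_zpowers_or h hp hq
end

section
/- The power graph of the generalized quaternion group Q_{2^n} (n ≥ 3) is isomorphic to the join K₂ ∨ (K_{2^{n-1}-2} ⊕ 2^{n-2}·K₂), that is, a complete graph on 2 vertices joined to the disjoint union of one complete graph on 2^{n-1}-2 vertices and 2^{n-2} copies of K₂. -/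
open SimpleGraph

/-!
Write `m = 2 ^ (n - 2)`, so that `Q_{2^n}` consists of the elements `a i` and `xa i`,
`i : ZMod (2m)`.
Since `a i ^ z = a (z * i)`, the element `a i` is a power of `a j` iff `j ∣ i` in `ZMod (2m)`, and
divisibility in `ZMod (2 ^ k)` is total: the `a i` form a clique. Each `xa j` has order 4 and
generates `{1, xa j, a m, xa (j + m)}`, while no `a i` generates an `xa j`. So `a 0` and `a m`
are adjacent to everything, the other `2m - 2` elements `a i` form a clique, and the `xa j`
split into the `m` edges `{xa j, xa (j + m)}`.
-/

namespace ZMod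

theorem dvd_of_gcd_val_dvd_val {N : ℕ} [NeZero N] {i j : ZMod N} (h : j.val.gcd N ∣ i.val) :
    j ∣ i :=
  calc j ∣ ((j.val.gcd N : ℕ) : ZMod N) := ⟨j⁻¹, (mul_inv_eq_gcd j).symm⟩
    _ ∣ (i.val : ZMod N) := Nat.cast_dvd_cast h
    _ = i := natCast_zmod_val i

theorem dvd_or_dvd_of_isPrimePow {N : ℕ} (hN : IsPrimePow N) (i j : ZMod N) :
    i ∣ j ∨ j ∣ i := by
  obtain ⟨p, k, hp, -, rfl⟩ := hN
  have : NeZero (p ^ k) := ⟨pow_ne_zero k hp.ne_zero⟩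
  have gcd_eq_pow (x : ZMod (p ^ k)) : ∃ s, x.val.gcd (p ^ k) = p ^ s :=
    let ⟨s, _, hs⟩ := (Nat.dvd_prime_pow hp.nat_prime).mp (Nat.gcd_dvd_right x.val (p ^ k))
    ⟨s, hs⟩
  obtain ⟨s, hs⟩ := gcd_eq_pow i
  obtain ⟨t, ht⟩ := gcd_eq_pow j
  rcases le_total s t with hst | hts
  · exact .inl <| dvd_of_gcd_val_dvd_val <|
      hs ▸ (pow_dvd_pow p hst).trans (ht ▸ Nat.gcd_dvd_left _ _)
  · exact .inr <| dvd_of_gcd_val_dvd_val <|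
      ht ▸ (pow_dvd_pow p hts).trans (hs ▸ Nat.gcd_dvd_left _ _)

theorem finEquiv_apply {N : ℕ} [NeZero N] (k : Fin N) : finEquiv N k = (k.val : ZMod N) := by
  rcases N with _ | N
  · exact absurd rfl (NeZero.ne 0)
  · exact (Fin.cast_val_eq_self k).symm

theorem natCast_add_self_two_mul (m : ℕ) : (m : ZMod (2 * m)) + m = 0 := by
  rw [← two_mul]
  exact_mod_cast natCast_self (2 * m)

theorem natCast_ne_zero_two_mul (m : ℕ) [NeZero m] : (m : ZMod (2 * m)) ≠ 0 := by
  rw [Ne, natCast_eq_zero_iff]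
  intro h
  have := Nat.le_of_dvd (NeZero.pos m) h
  have := NeZero.pos m
  omega

end ZMod

namespace QuaternionGroup

variable {m : ℕ}

theorem a_zpow (i : ZMod (2 * m)) (z : ℤ) : a i ^ z = a ((z : ZMod (2 * m)) * i) := by
  induction z using Int.induction_on with
  | zero => simp
  | succ k ih => rw [zpow_add_one, ih, a_mul_a]; push_cast; ring_nf
  | pred k ih => rw [zpow_sub_one, ih, mul_inv_eq_iff_eq_mul, a_mul_a]; push_cast; ring_nf

theorem a_mem_zpowers_a_iff {i j : ZMod (2 * m)} : a i ∈ Subgroup.zpowers (a j) ↔ j ∣ i := by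
  simp only [Subgroup.mem_zpowers_iff, a_zpow, a.injEq]
  constructor
  · rintro ⟨z, rfl⟩
    exact Dvd.intro_left _ rfl
  · rintro ⟨c, rfl⟩
    exact ⟨(c.cast : ℤ), by simp [mul_comm]⟩

theorem xa_notMem_zpowers_a (i j : ZMod (2 * m)) : xa j ∉ Subgroup.zpowers (a i) := by
  simp [Subgroup.mem_zpowers_iff, a_zpow]

theorem xa_pow_three (j : ZMod (2 * m)) : xa j ^ 3 = xa (j + (m : ZMod (2 * m))) := by
  rw [pow_succ, xa_sq, a_mul_xa]
  congr 1
  linear_combination -ZMod.natCast_add_self_two_mul m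

theorem mem_zpowers_xa_iff [NeZero m] {j : ZMod (2 * m)} {g : QuaternionGroup m} :
    g ∈ Subgroup.zpowers (xa j) ↔
      g = 1 ∨ g = xa j ∨ g = a m ∨ g = xa (j + (m : ZMod (2 * m))) := by
  simp only [mem_zpowers_iff_mem_range_orderOf, orderOf_xa, Finset.range_add_one]
  simp [xa_pow_three]
  tauto

theorem powerGraph_adj_a_a (hm : IsPrimePow (2 * m)) {i j : ZMod (2 * m)} :
    (powerGraph (QuaternionGroup m)).Adj (a i) (a j) ↔ i ≠ j := by
  simp only [powerGraph, a_mem_zpowers_a_iff, ne_eq, a.injEq]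
  exact and_iff_left_of_imp fun _ => ZMod.dvd_or_dvd_of_isPrimePow hm j i

theorem powerGraph_adj_a_xa [NeZero m] {i j : ZMod (2 * m)} :
    (powerGraph (QuaternionGroup m)).Adj (a i) (xa j) ↔ i = 0 ∨ i = m := by
  simp [powerGraph, mem_zpowers_xa_iff, xa_notMem_zpowers_a, one_def, -a_zero]

theorem powerGraph_adj_xa_xa [NeZero m] {i j : ZMod (2 * m)} :
    (powerGraph (QuaternionGroup m)).Adj (xa i) (xa j) ↔ j = i + m := by
  have hswap : i = j + m ↔ j = i + m := by
    constructor <;> intro h <;> linear_combination -h - ZMod.natCast_add_self_two_mul m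
  have hne : j = i + m → i ≠ j := by
    rintro rfl h
    exact ZMod.natCast_ne_zero_two_mul m (by linear_combination -h)
  simp only [powerGraph, mem_zpowers_xa_iff, one_def, ne_eq, xa.injEq, reduceCtorEq, false_or,
    hswap]
  exact ⟨by tauto, fun h => ⟨hne h, by tauto⟩⟩

def equivSum : ZMod (2 * m) ⊕ ZMod (2 * m) ≃ QuaternionGroup m where
  toFun := Sum.elim a xa
  invFun
    | a i => .inl i
    | xa i => .inr i
  left_inv := by rintro (i | i) <;> rfl
  right_inv := by rintro (i | i) <;> rfl

variable (m) [NeZero m]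

theorem card_central_indices : Fintype.card {i : ZMod (2 * m) // i = 0 ∨ i = m} = 2 := by
  rw [Fintype.card_subtype]
  convert Finset.card_pair (ZMod.natCast_ne_zero_two_mul m).symm using 2
  ext
  simp

theorem card_noncentral_indices :
    Fintype.card {i : ZMod (2 * m) // ¬(i = 0 ∨ i = m)} = 2 * m - 2 := by
  rw [Fintype.card_subtype_compl, card_central_indices, ZMod.card]

noncomputable def centralEquiv : Fin 2 ≃ {i : ZMod (2 * m) // i = 0 ∨ i = m} :=
  (Fintype.equivFinOfCardEq (card_central_indices m)).symm

noncomputable def noncentralEquiv :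
    Fin (2 * m - 2) ≃ {i : ZMod (2 * m) // ¬(i = 0 ∨ i = m)} :=
  (Fintype.equivFinOfCardEq (card_noncentral_indices m)).symm

/-- `(j, 0)` and `(j, 1)` index the edge `{xa j, xa (j + m)}` of the power graph. -/
def pairIndex : Fin m × Fin 2 ≃ ZMod (2 * m) :=
  (Equiv.prodComm _ _).trans (finProdFinEquiv.trans (ZMod.finEquiv (2 * m)).toEquiv)

noncomputable def vertexEquiv :
    Fin 2 ⊕ (Fin (2 * m - 2) ⊕ Fin m × Fin 2) ≃ QuaternionGroup m :=
  (Equiv.sumAssoc _ _ _).symm.trans <|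
    (Equiv.sumCongr ((Equiv.sumCongr (centralEquiv m) (noncentralEquiv m)).trans (Equiv.sumCompl _))
      (pairIndex m)).trans equivSum

variable {m}

theorem pairIndex_apply (j : Fin m) (b : Fin 2) :
    pairIndex m (j, b) = ((j + m * b : ℕ) : ZMod (2 * m)) := by
  simp [pairIndex, ZMod.finEquiv_apply]

theorem pairIndex_add_natCast (j : Fin m) (b : Fin 2) :
    pairIndex m (j, b) + m = pairIndex m (j, b + 1) := by
  fin_cases b <;> simp [pairIndex_apply, add_assoc, ZMod.natCast_add_self_two_mul]

theorem pairIndex_eq_add_natCast_iff {u v : Fin m × Fin 2} :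
    pairIndex m v = pairIndex m u + m ↔ u.1 = v.1 ∧ u ≠ v := by
  obtain ⟨j, b⟩ := u
  obtain ⟨j', b'⟩ := v
  have hb : b' = b + 1 ↔ b ≠ b' := by revert b b'; decide
  rw [pairIndex_add_natCast, (pairIndex m).injective.eq_iff, ne_eq, Prod.mk.injEq, Prod.mk.injEq,
    hb]
  tauto

@[simp]
theorem vertexEquiv_inl (p : Fin 2) : vertexEquiv m (.inl p) = a (centralEquiv m p) := rfl

@[simp]
theorem vertexEquiv_inr_inl (k : Fin (2 * m - 2)) :
    vertexEquiv m (.inr (.inl k)) = a (noncentralEquiv m k) := rfl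

@[simp]
theorem vertexEquiv_inr_inr (u : Fin m × Fin 2) :
    vertexEquiv m (.inr (.inr u)) = xa (pairIndex m u) := rfl

noncomputable def powerGraphIso (hm : IsPrimePow (2 * m)) :
    joinGraph (completeGraph (Fin 2))
        (disjUnionGraph (completeGraph (Fin (2 * m - 2))) (copiesK m 2)) ≃g
      powerGraph (QuaternionGroup m) where
  toEquiv := vertexEquiv m
  map_rel_iff' := by
    rintro (p | k | u) (q | l | v) <;>
      simp only [vertexEquiv_inl, vertexEquiv_inr_inl, vertexEquiv_inr_inr, joinGraph,
        disjUnionGraph, copiesK, top_adj, powerGraph_adj_a_a hm, powerGraph_adj_a_xa,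
        powerGraph_adj_xa_xa, adj_comm _ (xa _) (a _), pairIndex_eq_add_natCast_iff, ne_eq,
        Subtype.val_inj, EmbeddingLike.apply_eq_iff_eq, iff_true, iff_false]
    case inl.inr.inl => exact fun h => (noncentralEquiv m l).2 (h ▸ (centralEquiv m p).2)
    case inr.inl.inl => exact fun h => (noncentralEquiv m k).2 (h ▸ (centralEquiv m q).2)
    all_goals first | exact (centralEquiv m _).2 | exact (noncentralEquiv m _).2

end QuaternionGroup

/-- The power graph of the generalized quaternion group Q_{2^n} (n ≥ 3) is
K₂ ∨ (K_{2^{n-1}-2} ⊕ 2^{n-2}·K₂). -/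
theorem powerGraph_quaternion_iso (n : ℕ) (hn : 3 ≤ n) :
    Nonempty ((powerGraph (QuaternionGroup (2 ^ (n - 2)))) ≃g
      joinGraph (completeGraph (Fin 2))
        (disjUnionGraph (completeGraph (Fin (2 ^ (n - 1) - 2)))
          (copiesK (2 ^ (n - 2)) 2))) := by
  have hpow : 2 * 2 ^ (n - 2) = 2 ^ (n - 1) := by
    rw [← pow_succ']
    congr 1
    omega
  have hm : IsPrimePow (2 * 2 ^ (n - 2)) := hpow ▸ Nat.prime_two.isPrimePow.pow (by omega)
  have e := (QuaternionGroup.powerGraphIso hm).symm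
  rw [hpow] at e
  exact ⟨e⟩
end
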